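/- arXiv:1905.09017 — 8 statements merged into one kernel-verified Lean document; each statement's English description precedes it below -/
import Mathlib

section
/- Let (z_n) be the sequence of real numbers defined by z_0 = 1 and z_{n+1} = (z_n + 4)/(z_n + 5). Then for all n ≥ 0, z_n = -(2 + 2√2) + 4√2/(1 - (3 - 2√2)^{2n+2}). -/
lemma key_step (s a : ℝ) (hs : s^2 = 2) (hda : (1:ℝ) - a ≠ 0)
    (hdb : (1:ℝ) - (3-2*s)^2*a ≠ 0)
    (hz5 : -(2+2*s)+4*s/(1-a)+5 ≠ 0) :
    (-(2+2*s)+4*s/(1-a)+4)/(-(2+2*s)+4*s/(1-a)+5) = -(2+2*s) + 4*s/(1-(3-2*s)^2*a) := by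
  rw [div_eq_iff hz5]
  generalize hB : (1:ℝ) - (3-2*s)^2*a = B at hdb ⊢
  field_simp
  subst hB
  ring_nf
  linear_combination (-16*s^2*a + 16*s^2*a^3 + 48*s*a^2 - 48*s*a^3 - 4 + 44*a - 76*a^2 + 36*a^3 + (-16*a^2 - 16*a^3)*s^2 + 48*a^3*s + (-4*a + 40*a^2 - 36*a^3)) * hs

lemma key_base (s : ℝ) (hs : s^2 = 2) (hd : (1:ℝ) - (3-2*s)^2 ≠ 0) :
    (1:ℝ) = -(2+2*s) + 4*s/(1-(3-2*s)^2) := by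
  field_simp
  ring_nf
  linear_combination (-8*s + 12) * hs

theorem stmt_0 (z : ℕ → ℝ) (h0 : z 0 = 1)
    (hrec : ∀ n, z (n + 1) = (z n + 4) / (z n + 5)) :
    ∀ n, z n = -(2 + 2 * Real.sqrt 2) +
      4 * Real.sqrt 2 / (1 - (3 - 2 * Real.sqrt 2) ^ (2 * n + 2)) := by
  have hs : Real.sqrt 2 ^ 2 = 2 := Real.sq_sqrt (by norm_num)
  have hs0 : 0 ≤ Real.sqrt 2 := Real.sqrt_nonneg 2
  have hs1 : 1 < Real.sqrt 2 := by nlinarith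
  have hs2 : Real.sqrt 2 < 3 / 2 := by nlinarith
  set s : ℝ := Real.sqrt 2 with hsdef
  have hα0 : (0:ℝ) < 3 - 2 * s := by linarith
  have hα1 : 3 - 2 * s < 1 := by linarith
  intro n
  induction n with
  | zero =>
    rw [h0, show (2*0+2 : ℕ) = 2 by norm_num]
    have hd : (1:ℝ) - (3-2*s)^2 ≠ 0 := by nlinarith
    have := key_base s hs hd
    linarith [this]
  | succ n ih =>
    have ha0 : 0 < (3 - 2 * s) ^ (2 * n + 2) := pow_pos hα0 _
    have ha1 : (3 - 2 * s) ^ (2 * n + 2) < 1 := pow_lt_one₀ (le_of_lt hα0) hα1 (by omega)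
    have hb1 : (3 - 2 * s) ^ (2 * (n+1) + 2) < 1 := pow_lt_one₀ (le_of_lt hα0) hα1 (by omega)
    have hb : (3 - 2 * s) ^ (2 * (n+1) + 2) = (3 - 2*s)^2 * (3 - 2*s) ^ (2*n+2) := by
      rw [← pow_add]; ring_nf
    have hda : (1:ℝ) - (3 - 2*s) ^ (2*n+2) ≠ 0 := by linarith
    have hdb : (1:ℝ) - (3 - 2*s)^2 * (3 - 2*s) ^ (2*n+2) ≠ 0 := by rw [← hb]; linarith
    have hz5 : -(2 + 2*s) + 4*s/(1-(3 - 2*s) ^ (2*n+2)) + 5 ≠ 0 := by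
      have hp : 0 < 4*s/(1-(3 - 2*s) ^ (2*n+2)) := div_pos (by linarith) (by linarith)
      exact ne_of_gt (by linarith)
    have hih : z n = -(2+2*s) + 4*s/(1-(3 - 2*s) ^ (2*n+2)) := by rw [ih]
    rw [hrec n, hih, hb, show (-(2+2*s) + 4*s/(1-(3 - 2*s) ^ (2*n+2)) + 4)
        = (-(2+2*s) + 4*s/(1-(3 - 2*s) ^ (2*n+2)) + 4) from rfl]
    exact key_step s ((3 - 2*s) ^ (2*n+2)) hs hda hdb hz5
end

section
/- Let α = 3 - 2√2, z_n = -(2+2√2) + 4√2/(1-α^{2n+2}), and define t_0 = -1 and t_n = t_{n-1}/(z_{n-1}+5) for n ≥ 1. Then t_n = -4√2 · α^{n+1} / (1 - α^{2n+2}) for all n ≥ 0. -/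
/-!
Write `c = 4√2`. The constant `α = 3 - 2√2` satisfies `c α = 1 - α²`, and this identity collapses
the divisor of the recurrence: `z n + 5 = α + c / (1 - α^(2n+2)) = (1 - α^(2n+4)) / (α (1 - α^(2n+2)))`.
The recurrence then telescopes to `t n = -c α^(n+1) / (1 - α^(2n+2))`, starting from
`t 0 = -c α / (1 - α²) = -1`.
-/

lemma four_mul_sqrt_two_mul_three_sub :
    4 * √2 * (3 - 2 * √2) = 1 - (3 - 2 * √2) ^ 2 := by
  linear_combination (-4 : ℝ) * Real.sq_sqrt (show (0 : ℝ) ≤ 2 by norm_num)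

lemma three_sub_two_mul_sqrt_two_sq_lt_one : (3 - 2 * √2) ^ 2 < 1 := by
  have h1 : 1 < √2 := Real.one_lt_sqrt_two
  have h2 : √2 < 3 / 2 := by nlinarith [Real.sq_sqrt (show (0 : ℝ) ≤ 2 by norm_num)]
  nlinarith

section

variable {α c : ℝ}

lemma one_sub_pow_two_mul_add_two_pos (hα : α ^ 2 < 1) (n : ℕ) : 0 < 1 - α ^ (2 * n + 2) := by
  have : (α ^ 2) ^ (n + 1) < 1 := pow_lt_one₀ (sq_nonneg α) hα n.succ_ne_zero
  rw [← pow_mul, mul_add, mul_one] at this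
  linarith

lemma add_div_one_sub_pow_eq (hc : c * α = 1 - α ^ 2) (hα : α ^ 2 < 1) (n : ℕ) :
    α + c / (1 - α ^ (2 * n + 2)) = (1 - α ^ (2 * n + 4)) / (α * (1 - α ^ (2 * n + 2))) := by
  have hα0 : α ≠ 0 := by rintro rfl; norm_num at hc
  have hD := (one_sub_pow_two_mul_add_two_pos hα n).ne'
  field_simp
  linear_combination hc

theorem eq_neg_mul_pow_div_of_rec (hc : c * α = 1 - α ^ 2) (hα : α ^ 2 < 1) {t : ℕ → ℝ}
    (ht0 : t 0 = -1) (htrec : ∀ n, t (n + 1) = t n / (α + c / (1 - α ^ (2 * n + 2)))) (n : ℕ) :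
    t n = -c * α ^ (n + 1) / (1 - α ^ (2 * n + 2)) := by
  have hα0 : α ≠ 0 := by rintro rfl; norm_num at hc
  induction n with
  | zero =>
    rw [ht0, eq_div_iff (one_sub_pow_two_mul_add_two_pos hα 0).ne']
    linear_combination hc
  | succ n ih =>
    have hD := (one_sub_pow_two_mul_add_two_pos hα n).ne'
    have hD' : 1 - α ^ (2 * n + 4) ≠ 0 := (one_sub_pow_two_mul_add_two_pos hα (n + 1)).ne'
    rw [show 2 * (n + 1) + 2 = 2 * n + 4 by ring]
    rw [htrec, ih, add_div_one_sub_pow_eq hc hα]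
    field_simp
    ring

end

theorem stmt_2 (α : ℝ) (hα : α = 3 - 2 * Real.sqrt 2)
    (z t : ℕ → ℝ)
    (hz : ∀ n, z n = -(2 + 2 * Real.sqrt 2) + 4 * Real.sqrt 2 / (1 - α ^ (2 * n + 2)))
    (ht0 : t 0 = -1)
    (htrec : ∀ n, 1 ≤ n → t n = t (n - 1) / (z (n - 1) + 5)) :
    ∀ n, t n = -4 * Real.sqrt 2 * α ^ (n + 1) / (1 - α ^ (2 * n + 2)) := by
  have hc : 4 * √2 * α = 1 - α ^ 2 := hα ▸ four_mul_sqrt_two_mul_three_sub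
  have hα1 : α ^ 2 < 1 := hα ▸ three_sub_two_mul_sqrt_two_sq_lt_one
  have hrec : ∀ n, t (n + 1) = t n / (α + 4 * √2 / (1 - α ^ (2 * n + 2))) := fun n => by
    rw [htrec (n + 1) n.succ_pos, Nat.add_sub_cancel, hz, hα]
    ring
  intro n
  rw [eq_neg_mul_pow_div_of_rec hc hα1 ht0 hrec n]
  ring
end

section
/- Let α = 3 - 2√2, z_n = -(2+2√2) + 4√2/(1-α^{2n+2}), and t_n = -4√2·α^{n+1}/(1-α^{2n+2}). Then for all n ≥ 1, (z_n - t_n)/2 · (t_{n-1} + z_{n-1} + 4)/2 = 1. -/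
theorem stmt_4 (α : ℝ) (hα : α = 3 - 2 * Real.sqrt 2)
    (z t : ℕ → ℝ)
    (hz : ∀ n, z n = -(2 + 2 * Real.sqrt 2) + 4 * Real.sqrt 2 / (1 - α ^ (2 * n + 2)))
    (ht : ∀ n, t n = -4 * Real.sqrt 2 * α ^ (n + 1) / (1 - α ^ (2 * n + 2))) :
    ∀ n, 1 ≤ n → (z n - t n) / 2 * ((t (n - 1) + z (n - 1) + 4) / 2) = 1 := by
  intro n hn
  obtain ⟨m, rfl⟩ := Nat.exists_eq_add_of_le hn
  set s := Real.sqrt 2 with hsdef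
  have hs : s ^ 2 = 2 := Real.sq_sqrt (by norm_num)
  have hs1 : 1 < s := by nlinarith [Real.sqrt_nonneg 2]
  have hs2 : s < 3 / 2 := by nlinarith [Real.sqrt_nonneg 2]
  have h0 : 0 < α := by rw [hα]; linarith
  have h1 : α < 1 := by rw [hα]; linarith
  have hq : α * (3 + 2 * s) = 1 := by rw [hα]; nlinarith
  set b := α ^ (m + 1) with hbdef
  have hb0 : 0 < b := pow_pos h0 _
  have hb1 : b < 1 := pow_lt_one₀ h0.le h1 (by omega)
  have hab0 : 0 < α * b := mul_pos h0 hb0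
  have hab1 : α * b < 1 := by nlinarith
  have p1 : α ^ (1 + m + 1) = α * b := by rw [hbdef, ← pow_succ']; ring_nf
  have p2 : α ^ (2 * (1 + m) + 2) = (α * b) ^ 2 := by
    rw [hbdef, ← pow_succ']; rw [← pow_mul]; ring_nf
  have p3 : α ^ (2 * m + 2) = b ^ 2 := by rw [hbdef, ← pow_mul]; ring_nf
  have d1 : (1 : ℝ) - (α * b) ^ 2 ≠ 0 := by nlinarith
  have d2 : (1 : ℝ) - b ^ 2 ≠ 0 := by nlinarith
  have d3 : (1 : ℝ) - α * b ≠ 0 := by nlinarith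
  have d4 : (1 : ℝ) + b ≠ 0 := by nlinarith
  simp only [hz, ht, Nat.add_sub_cancel_left, p1, p2, p3, ← hbdef]
  have F1 : (-(2 + 2 * s) + 4 * s / (1 - (α * b) ^ 2)) - (-4 * s * (α * b) / (1 - (α * b) ^ 2))
      = ((2 * s - 2) + (2 + 2 * s) * (α * b)) / (1 - α * b) := by
    have e : (1 : ℝ) - (α * b) ^ 2 = (1 - α * b) * (1 + α * b) := by ring
    have d5 : (1 : ℝ) + α * b ≠ 0 := by nlinarith
    rw [e]
    field_simp
    ring
  have F2 : (-4 * s * b / (1 - b ^ 2)) + (-(2 + 2 * s) + 4 * s / (1 - b ^ 2)) + 4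
      = ((2 + 2 * s) + (2 - 2 * s) * b) / (1 + b) := by
    field_simp
    ring
  rw [F1, F2]
  have hmain : ((2 * s - 2) + (2 + 2 * s) * (α * b)) * ((2 + 2 * s) + (2 - 2 * s) * b)
      = 4 * ((1 - α * b) * (1 + b)) := by
    linear_combination (4 - 20 * b + 68 * α * b + 32 * α * b * s - 4 * α * b ^ 2) * hs
      + (b * (48 - 8 * s - 16 * s ^ 2)) * hq
  rw [div_div, div_div, div_mul_div_comm, div_eq_one_iff_eq (mul_ne_zero (mul_ne_zero d3 two_ne_zero) (mul_ne_zero d4 two_ne_zero))]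
  linear_combination hmain
end

section
/- Let α = 3 - 2√2, z_n = -(2+2√2) + 4√2/(1-α^{2n+2}), and t_n = -4√2·α^{n+1}/(1-α^{2n+2}). Then for all n ≥ 1, z_n - t_n = (-t_{n-1} + z_{n-1} + 4)/(z_{n-1} + 5). -/
theorem stmt_5 (α : ℝ) (hα : α = 3 - 2 * Real.sqrt 2)
    (z t : ℕ → ℝ)
    (hz : ∀ n, z n = -(2 + 2 * Real.sqrt 2) + 4 * Real.sqrt 2 / (1 - α ^ (2 * n + 2)))
    (ht : ∀ n, t n = -4 * Real.sqrt 2 * α ^ (n + 1) / (1 - α ^ (2 * n + 2))) :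
    ∀ n, 1 ≤ n → z n - t n = (-t (n - 1) + z (n - 1) + 4) / (z (n - 1) + 5) := by
  intro n hn
  obtain ⟨m, rfl⟩ : ∃ m, n = m + 1 := ⟨n - 1, (Nat.succ_pred_eq_of_pos hn).symm⟩
  simp only [Nat.add_sub_cancel]
  have hs : Real.sqrt 2 ^ 2 = 2 := Real.sq_sqrt (by norm_num)
  have hs0 : 0 ≤ Real.sqrt 2 := Real.sqrt_nonneg 2
  have hs1 : 1 < Real.sqrt 2 := by nlinarith
  have hs2 : Real.sqrt 2 < 3/2 := by nlinarith
  have hα0 : 0 < α := by rw [hα]; linarith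
  have hα1 : α < 1 := by rw [hα]; linarith
  have hpow : ∀ k : ℕ, 0 < 1 - α ^ (k + 1) := by
    intro k
    have := pow_lt_one₀ (n := k + 1) hα0.le hα1 (by omega)
    linarith
  have h1 : 1 - α ^ (2 * (m + 1) + 2) ≠ 0 := by
    have := hpow (2 * (m + 1) + 1)
    intro h; rw [(by ring : 2 * (m + 1) + 2 = 2 * (m + 1) + 1 + 1)] at h; linarith
  have h2 : 1 - α ^ (2 * m + 2) ≠ 0 := by
    have := hpow (2 * m + 1)
    intro h; rw [(by ring : 2 * m + 2 = 2 * m + 1 + 1)] at h; linarith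
  have h2' : 0 < 1 - α ^ (2 * m + 2) := by
    have := hpow (2 * m + 1)
    rw [(by ring : 2 * m + 1 + 1 = 2 * m + 2)] at this; linarith
  have h3 : z m + 5 ≠ 0 := by
    rw [hz]
    have : 0 < 4 * Real.sqrt 2 / (1 - α ^ (2 * m + 2)) := by positivity
    intro h; nlinarith
  rw [hz, ht, hz, ht]
  have hα2 : α ^ 2 = 6 * α - 1 := by rw [hα]; nlinarith
  have hQ : Real.sqrt 2 = (3 - α) / 2 := by rw [hα]; ring
  rw [hz] at h3
  rw [hQ] at h3 ⊢
  have e1 : α ^ (2 * (m + 1) + 2) = (α ^ (m + 1)) ^ 2 * α ^ 2 := by ring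
  have e2 : α ^ (m + 1 + 1) = α ^ (m + 1) * α := by ring
  have e3 : α ^ (2 * m + 2) = (α ^ (m + 1)) ^ 2 := by ring
  rw [e1] at h1
  rw [e3] at h2 h3
  rw [e1, e2, e3]
  rw [eq_div_iff h3]
  have h1' : 1 - α ^ 2 * (α ^ (m + 1)) ^ 2 ≠ 0 := by rw [mul_comm]; exact h1
  field_simp
  linear_combination (4 - 24 * α ^ (m+1) - 4 * (α ^ (m+1))^2 + 8 * α * α ^ (m+1) - 24 * α * (α ^ (m+1))^2 + 4 * α^2 * (α ^ (m+1))^2 + 4 * α^2 * (α ^ (m+1))^4) * hα2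
end

section
/- Let α = 3 - 2√2 and for 0 ≤ j ≤ i ≤ n define r(i,j) = (i - j) + (1 - α^{i-j})·(2 - α^{i+j+1} + α^{2j+1} + α^{2n-2i+1}·(1 - α^{i-j} - 2α^{i+j+1})) / (4√2·(1 - α^{2n+2})). Then for all fixed j and all i with j ≤ i < n, r(i+1, j) > r(i, j). -/
/-! Write `r i j = (i - j) + g i j / D`. For `α = 3 - 2√2` each factor of the numerator `g` is
controlled by `0 < α ≤ 1/2`, giving `0 ≤ g ≤ 2 (1 + α)`, while `D ≥ 4√2 (1 - α²) > 2 (1 + α)`.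
Hence `i - j ≤ r i j < i - j + 1`, and these unit-length windows are disjoint for consecutive `i`. -/

lemma correction_numerator_mem_Icc {α x y z w : ℝ} (hα : α ≤ 1 / 2)
    (hx₀ : 0 ≤ x) (hx₁ : x ≤ 1) (hy₀ : 0 ≤ y) (hy : y ≤ α) (hz₀ : 0 ≤ z)
    (hz : z ≤ α) (hw₀ : 0 ≤ w) (hw : w ≤ α) :
    0 ≤ (1 - x) * (2 - y + z + w * (1 - x - 2 * y)) ∧
      (1 - x) * (2 - y + z + w * (1 - x - 2 * y)) ≤ 2 * (1 + α) := by
  have hB₀ : 0 ≤ 2 - y + z + w * (1 - x - 2 * y) := by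
    nlinarith [mul_nonneg hw₀ (sub_nonneg.2 hx₁), mul_le_mul hw hy hy₀ (hw₀.trans hw)]
  have hB₁ : 2 - y + z + w * (1 - x - 2 * y) ≤ 2 * (1 + α) := by
    nlinarith [mul_nonneg hw₀ (add_nonneg hx₀ (mul_nonneg zero_le_two hy₀))]
  exact ⟨mul_nonneg (sub_nonneg.2 hx₁) hB₀, by nlinarith [mul_nonneg hx₀ hB₀]⟩

lemma three_sub_two_sqrt_two_pos : 0 < 3 - 2 * Real.sqrt 2 := by
  nlinarith [Real.sq_sqrt (zero_le_two : (0 : ℝ) ≤ 2), Real.sqrt_nonneg 2]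

lemma three_sub_two_sqrt_two_le_half : 3 - 2 * Real.sqrt 2 ≤ 1 / 2 := by
  nlinarith [Real.sq_sqrt (zero_le_two : (0 : ℝ) ≤ 2), Real.sqrt_nonneg 2]

lemma div_mem_Ico_of_le_two_mul_one_add {g : ℝ} (n : ℕ) (hg₀ : 0 ≤ g)
    (hg : g ≤ 2 * (1 + (3 - 2 * Real.sqrt 2))) :
    0 ≤ g / (4 * Real.sqrt 2 * (1 - (3 - 2 * Real.sqrt 2) ^ (2 * n + 2))) ∧
      g / (4 * Real.sqrt 2 * (1 - (3 - 2 * Real.sqrt 2) ^ (2 * n + 2))) < 1 := by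
  set α := 3 - 2 * Real.sqrt 2 with hα
  have hα₀ := three_sub_two_sqrt_two_pos
  have hpow : α ^ (2 * n + 2) ≤ α ^ 2 :=
    pow_le_pow_of_le_one hα₀.le (three_sub_two_sqrt_two_le_half.trans (by norm_num)) (by omega)
  have hD : 2 * (1 + α) < 4 * Real.sqrt 2 * (1 - α ^ (2 * n + 2)) := by
    have h2 := Real.sq_sqrt (zero_le_two : (0 : ℝ) ≤ 2)
    have hsqrt : Real.sqrt 2 < 1.415 := by nlinarith [Real.sqrt_nonneg 2]
    nlinarith [Real.sqrt_nonneg 2]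
  have hD₀ : 0 < 4 * Real.sqrt 2 * (1 - α ^ (2 * n + 2)) := by linarith
  exact ⟨div_nonneg hg₀ hD₀.le, (div_lt_one hD₀).2 (by linarith)⟩

lemma sub_le_and_lt_sub_add_one {α : ℝ} (hα : α = 3 - 2 * Real.sqrt 2) {n : ℕ}
    {r : ℕ → ℕ → ℝ}
    (hr : ∀ i j, j ≤ i → i ≤ n → r i j = (i - j : ℝ) +
      (1 - α ^ (i - j)) * (2 - α ^ (i + j + 1) + α ^ (2 * j + 1) +
        α ^ (2 * n - 2 * i + 1) * (1 - α ^ (i - j) - 2 * α ^ (i + j + 1))) /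
      (4 * Real.sqrt 2 * (1 - α ^ (2 * n + 2))))
    {i j : ℕ} (hji : j ≤ i) (hin : i ≤ n) :
    (i - j : ℝ) ≤ r i j ∧ r i j < i - j + 1 := by
  have hα₀ : 0 ≤ α := hα ▸ three_sub_two_sqrt_two_pos.le
  have hα₁ : α ≤ 1 / 2 := hα ▸ three_sub_two_sqrt_two_le_half
  have hpow (k : ℕ) : α ^ (k + 1) ≤ α := pow_le_of_le_one hα₀ (hα₁.trans (by norm_num)) (by omega)
  obtain ⟨hg₀, hg⟩ := correction_numerator_mem_Icc hα₁ (pow_nonneg hα₀ (i - j))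
    (pow_le_one₀ hα₀ (hα₁.trans (by norm_num))) (pow_nonneg hα₀ _) (hpow (i + j)) (pow_nonneg hα₀ _)
    (hpow (2 * j)) (pow_nonneg hα₀ _) (hpow (2 * n - 2 * i))
  subst hα
  obtain ⟨hq₀, hq₁⟩ := div_mem_Ico_of_le_two_mul_one_add n hg₀ hg
  rw [hr i j hji hin]
  constructor <;> linarith

theorem stmt_7 (α : ℝ) (hα : α = 3 - 2 * Real.sqrt 2) (n : ℕ)
    (r : ℕ → ℕ → ℝ)
    (hr : ∀ i j, j ≤ i → i ≤ n → r i j = (i - j : ℝ) +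
      (1 - α ^ (i - j)) * (2 - α ^ (i + j + 1) + α ^ (2 * j + 1) +
        α ^ (2 * n - 2 * i + 1) * (1 - α ^ (i - j) - 2 * α ^ (i + j + 1))) /
      (4 * Real.sqrt 2 * (1 - α ^ (2 * n + 2)))) :
    ∀ i j, j ≤ i → i < n → r (i + 1) j > r i j := by
  intro i j hji hin
  have hnext := (sub_le_and_lt_sub_add_one hα hr (hji.trans i.le_succ) hin).1
  have hcur := (sub_le_and_lt_sub_add_one hα hr hji hin.le).2
  push_cast at hnext
  linarith
end

section
/- Let α = 3 - 2√2 and for 1 ≤ i ≤ n define r(i) = (1 + α^n - α^{n-i+1} - α^{i-1})/(2√2(1-α^n)) + (n-i+1)(i-1)/n. Then for 1 ≤ i < n, r(i+1) - r(i) = (1-α)·α^{-1-i}·(α^{2i} - α^{n+1})/(2√2(1-α^n)) + (n+1-2i)/n; consequently r(i+1) ≥ r(i) if n ≥ 2i - 1 and r(i+1) < r(i) otherwise. -/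
/-!
Both summands of `r (i + 1) - r i` change sign at the same place: after telescoping, the
exponential part is `(1 - α) (α ^ (i - 1) - α ^ (n - i))` over a positive denominator, and for
`0 < α < 1` this is nonnegative exactly when `i - 1 ≤ n - i`, which is also when the polynomial
part `(n + 1 - 2 i) / n` is nonnegative.
-/

/-- The closed form of `r` with `2 √2` replaced by an arbitrary constant `c`. -/
noncomputable def resistanceProfile (α c : ℝ) (n i : ℕ) : ℝ :=
  (1 + α ^ n - α ^ (n - i + 1) - α ^ (i - 1)) / (c * (1 - α ^ n)) +
    ((n : ℝ) - i + 1) * ((i : ℝ) - 1) / n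

namespace resistanceProfile

variable {α c : ℝ} {n i : ℕ}

theorem succ_sub (hi : 1 ≤ i) (hin : i < n) :
    resistanceProfile α c n (i + 1) - resistanceProfile α c n i =
      (1 - α) * (α ^ (i - 1) - α ^ (n - i)) / (c * (1 - α ^ n)) +
        ((n : ℝ) + 1 - 2 * i) / n := by
  obtain ⟨j, rfl⟩ : ∃ j, i = j + 1 := ⟨i - 1, by omega⟩
  obtain ⟨k, rfl⟩ : ∃ k, n = j + k + 2 := ⟨n - j - 2, by omega⟩
  simp only [resistanceProfile, show j + k + 2 - (j + 1 + 1) + 1 = k + 1 by omega,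
    show j + k + 2 - (j + 1) = k + 1 by omega, Nat.add_sub_cancel]
  push_cast
  ring

theorem succ_sub_nonneg_iff (hα0 : 0 < α) (hα1 : α < 1) (hc : 0 < c) (hi : 1 ≤ i)
    (hin : i < n) :
    0 ≤ resistanceProfile α c n (i + 1) - resistanceProfile α c n i ↔ 2 * i - 1 ≤ n := by
  have hαn : α ^ n < 1 := pow_lt_one₀ hα0.le hα1 (by omega)
  have hden : 0 < c * (1 - α ^ n) := mul_pos hc (by linarith)
  have hn : (0 : ℝ) < n := by exact_mod_cast (by omega : 0 < n)
  have hpow : α ^ (n - i) ≤ α ^ (i - 1) ↔ i - 1 ≤ n - i :=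
    pow_le_pow_iff_right_of_lt_one₀ hα0 hα1
  rw [succ_sub hi hin]
  constructor
  · intro h
    by_contra! hlt
    have hexp : α ^ (i - 1) - α ^ (n - i) < 0 := by
      linarith [not_le.mp (mt hpow.mp (by omega))]
    have hpoly : (n : ℝ) + 1 - 2 * i < 0 := by
      have : (n : ℝ) + 1 < 2 * i := by exact_mod_cast (by omega : n + 1 < 2 * i)
      linarith
    have := div_neg_of_neg_of_pos (mul_neg_of_pos_of_neg (sub_pos.mpr hα1) hexp) hden
    have := div_neg_of_neg_of_pos hpoly hn
    linarith
  · intro h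
    have hexp : 0 ≤ α ^ (i - 1) - α ^ (n - i) := sub_nonneg.mpr (hpow.mpr (by omega))
    have hpoly : (0 : ℝ) ≤ n + 1 - 2 * i := by
      have : (2 * i : ℝ) ≤ n + 1 := by exact_mod_cast (by omega : 2 * i ≤ n + 1)
      linarith
    positivity

end resistanceProfile

theorem zpow_neg_one_sub_mul_pow_sub_pow {α : ℝ} (hα : α ≠ 0) {n i : ℕ} (hi : 1 ≤ i)
    (hin : i ≤ n) :
    α ^ (-1 - (i : ℤ)) * (α ^ (2 * i) - α ^ (n + 1)) = α ^ (i - 1) - α ^ (n - i) := by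
  obtain ⟨j, rfl⟩ : ∃ j, i = j + 1 := ⟨i - 1, by omega⟩
  obtain ⟨k, rfl⟩ : ∃ k, n = j + k + 1 := ⟨n - j - 1, by omega⟩
  rw [show -1 - ((j + 1 : ℕ) : ℤ) = -((j + 2 : ℕ) : ℤ) by push_cast; ring, zpow_neg,
    zpow_natCast, show j + k + 1 - (j + 1) = k by omega, Nat.add_sub_cancel]
  field_simp
  ring

theorem three_sub_two_sqrt_two_mem_Ioo : 3 - 2 * Real.sqrt 2 ∈ Set.Ioo (0 : ℝ) 1 := by
  have hs : Real.sqrt 2 ^ 2 = 2 := Real.sq_sqrt (by norm_num)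
  have hs0 : 0 < Real.sqrt 2 := by positivity
  constructor <;> nlinarith

theorem stmt_15_general (α : ℝ) (hα : α = 3 - 2 * Real.sqrt 2) (n : ℕ)
    (r : ℕ → ℝ)
    (hr : ∀ i, 1 ≤ i → i ≤ n → r i =
      (1 + α ^ n - α ^ (n - i + 1) - α ^ (i - 1)) / (2 * Real.sqrt 2 * (1 - α ^ n)) +
      ((n : ℝ) - i + 1) * ((i : ℝ) - 1) / n) :
    ∀ i, 1 ≤ i → i < n →
      (r (i + 1) - r i =
        (1 - α) * α ^ (-1 - (i : ℤ)) * (α ^ (2 * i) - α ^ (n + 1)) /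
          (2 * Real.sqrt 2 * (1 - α ^ n)) + ((n : ℝ) + 1 - 2 * i) / n) ∧
      (n ≥ 2 * i - 1 → r (i + 1) ≥ r i) ∧ (n < 2 * i - 1 → r (i + 1) < r i) := by
  intro i hi hin
  obtain ⟨hα0, hα1⟩ := hα ▸ three_sub_two_sqrt_two_mem_Ioo
  have hc : (0 : ℝ) < 2 * Real.sqrt 2 := by positivity
  have hdiff : r (i + 1) - r i = resistanceProfile α (2 * Real.sqrt 2) n (i + 1) -
      resistanceProfile α (2 * Real.sqrt 2) n i := by
    rw [hr (i + 1) (by omega) hin, hr i hi hin.le, resistanceProfile, resistanceProfile]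
  have hsign := resistanceProfile.succ_sub_nonneg_iff hα0 hα1 hc hi hin
  rw [← hdiff] at hsign
  refine ⟨?_, fun h => sub_nonneg.mp (hsign.mpr h), fun h => sub_neg.mp ?_⟩
  · rw [hdiff, resistanceProfile.succ_sub hi hin, mul_assoc (1 - α),
      zpow_neg_one_sub_mul_pow_sub_pow hα0.ne' hi hin.le]
  · exact not_le.mp (mt hsign.mp (not_le.mpr h))

theorem stmt_15 (α : ℝ) (hα : α = 3 - 2 * Real.sqrt 2) (n : ℕ) (hn : 3 ≤ n)
    (r : ℕ → ℝ)
    (hr : ∀ i, 1 ≤ i → i ≤ n → r i =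
      (1 + α ^ n - α ^ (n - i + 1) - α ^ (i - 1)) / (2 * Real.sqrt 2 * (1 - α ^ n)) +
      ((n : ℝ) - i + 1) * ((i : ℝ) - 1) / n) :
    ∀ i, 1 ≤ i → i < n →
      (r (i + 1) - r i =
        (1 - α) * α ^ (-1 - (i : ℤ)) * (α ^ (2 * i) - α ^ (n + 1)) /
          (2 * Real.sqrt 2 * (1 - α ^ n)) + ((n : ℝ) + 1 - 2 * i) / n) ∧
      (n ≥ 2 * i - 1 → r (i + 1) ≥ r i) ∧ (n < 2 * i - 1 → r (i + 1) < r i) :=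
  stmt_15_general α hα n r hr
end

section
/- Let α = 3 - 2√2 and n ≥ 3. Then √2(1+α^n)/(1-α^n) > (1+α^n)/(√2(1-α^n)); that is, r(u_1,v_1) > r(p_1,q_1) in the hexagonal cylinder chain R_n. Moreover (1+α^n)/(√2(1-α^n)) is the minimum among the six values (1+α^n)/(√2(1-α^n)), (4-√2-(4+√2)α^n)/(2(1-α^n)) - 1/n, (2-√2-(2+√2)α^n)/(1-α^n) + (n-1)/n, √2(1+α^n)/(1-α^n), (4√2-1-(1+4√2)α^n)/(4√2(1-α^n)) - 1/(4n), and 7(1+α^n)/(4√2(1-α^n)) - 1/(4n). -/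
/-! Put x = α ^ n and R = (1 + x) / (√2 (1 - x)). Each of the six values is an affine
function of R and 1 / n (2R, 2 - R - 1/n, 3 - 2R - 1/n, 1 - R/4 - 1/(4n), 7R/4 - 1/(4n)),
so the comparisons reduce to linear inequalities. They follow from 1/n ≤ 1/3 and
R ∈ [1/2, 11/15], the latter because 0 ≤ x ≤ α ^ 3 = 99 - 70√2 < 1/100. -/

open Real

lemma three_sub_two_mul_sqrt_two_pos : 0 < 3 - 2 * √2 := by
  nlinarith [sqrt_two_lt_three_halves]

lemma three_sub_two_mul_sqrt_two_lt_one : 3 - 2 * √2 < 1 := by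
  nlinarith [one_lt_sqrt_two]

lemma three_sub_two_mul_sqrt_two_pow_three : (3 - 2 * √2) ^ 3 = 99 - 70 * √2 := by
  linear_combination (36 - 8 * √2) * sq_sqrt (zero_le_two (α := ℝ))

lemma three_sub_two_mul_sqrt_two_pow_le {n : ℕ} (hn : 3 ≤ n) :
    (3 - 2 * √2) ^ n ≤ 1 / 100 := by
  have : (9899 / 7000 : ℝ) < √2 := lt_sqrt_of_sq_lt (by norm_num)
  calc (3 - 2 * √2) ^ n ≤ (3 - 2 * √2) ^ 3 :=
        pow_le_pow_of_le_one three_sub_two_mul_sqrt_two_pos.le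
          three_sub_two_mul_sqrt_two_lt_one.le hn
    _ = 99 - 70 * √2 := three_sub_two_mul_sqrt_two_pow_three
    _ ≤ 1 / 100 := by linarith

section

variable {x : ℝ}

lemma sqrt_two_mul_one_add_div_one_sub (x : ℝ) :
    √2 * (1 + x) / (1 - x) = 2 * ((1 + x) / (√2 * (1 - x))) := by
  conv_rhs => rw [div_mul_eq_div_div_swap, ← mul_div_assoc, mul_div_right_comm, div_sqrt]
  rw [mul_div_assoc]

lemma seven_mul_one_add_div (x : ℝ) :
    7 * (1 + x) / (4 * √2 * (1 - x)) = 7 / 4 * ((1 + x) / (√2 * (1 - x))) := by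
  field_simp

lemma four_sub_sqrt_two_sub_mul_div (hx : x ≠ 1) :
    (4 - √2 - (4 + √2) * x) / (2 * (1 - x)) = 2 - (1 + x) / (√2 * (1 - x)) := by
  have : 1 - x ≠ 0 := sub_ne_zero.mpr hx.symm
  field_simp
  linear_combination (-(1 + x)) * sq_sqrt (zero_le_two (α := ℝ))

lemma two_sub_sqrt_two_sub_mul_div (hx : x ≠ 1) :
    (2 - √2 - (2 + √2) * x) / (1 - x) = 2 - 2 * ((1 + x) / (√2 * (1 - x))) := by
  have : 1 - x ≠ 0 := sub_ne_zero.mpr hx.symm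
  field_simp
  linear_combination (-(1 + x)) * sq_sqrt (zero_le_two (α := ℝ))

lemma four_mul_sqrt_two_sub_one_sub_mul_div (hx : x ≠ 1) :
    (4 * √2 - 1 - (1 + 4 * √2) * x) / (4 * √2 * (1 - x)) =
      1 - (1 + x) / (√2 * (1 - x)) / 4 := by
  have : 1 - x ≠ 0 := sub_ne_zero.mpr hx.symm
  field_simp
  ring

lemma one_add_div_sqrt_two_mul_one_sub_mem_Icc (hx₀ : 0 ≤ x) (hx : x ≤ 1 / 100) :
    (1 + x) / (√2 * (1 - x)) ∈ Set.Icc (1 / 2) (11 / 15) := by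
  have : (141 / 100 : ℝ) < √2 := lt_sqrt_of_sq_lt (by norm_num)
  have hd : 0 < √2 * (1 - x) := mul_pos (by positivity) (by linarith)
  rw [Set.mem_Icc, le_div_iff₀ hd, div_le_iff₀ hd]
  constructor <;> nlinarith [sqrt_two_lt_three_halves]

end

theorem stmt_16 (α : ℝ) (hα : α = 3 - 2 * Real.sqrt 2) (n : ℕ) (hn : 3 ≤ n) :
    (Real.sqrt 2 * (1 + α ^ n) / (1 - α ^ n) >
      (1 + α ^ n) / (Real.sqrt 2 * (1 - α ^ n))) ∧
    ((1 + α ^ n) / (Real.sqrt 2 * (1 - α ^ n)) ≤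
      (4 - Real.sqrt 2 - (4 + Real.sqrt 2) * α ^ n) / (2 * (1 - α ^ n)) - 1 / n) ∧
    ((1 + α ^ n) / (Real.sqrt 2 * (1 - α ^ n)) ≤
      (2 - Real.sqrt 2 - (2 + Real.sqrt 2) * α ^ n) / (1 - α ^ n) + ((n : ℝ) - 1) / n) ∧
    ((1 + α ^ n) / (Real.sqrt 2 * (1 - α ^ n)) ≤
      Real.sqrt 2 * (1 + α ^ n) / (1 - α ^ n)) ∧
    ((1 + α ^ n) / (Real.sqrt 2 * (1 - α ^ n)) ≤
      (4 * Real.sqrt 2 - 1 - (1 + 4 * Real.sqrt 2) * α ^ n) /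
        (4 * Real.sqrt 2 * (1 - α ^ n)) - 1 / (4 * n)) ∧
    ((1 + α ^ n) / (Real.sqrt 2 * (1 - α ^ n)) ≤
      7 * (1 + α ^ n) / (4 * Real.sqrt 2 * (1 - α ^ n)) - 1 / (4 * n)) := by
  subst hα
  set x := (3 - 2 * √2) ^ n
  have hx₀ : 0 ≤ x := pow_nonneg three_sub_two_mul_sqrt_two_pos.le n
  have hx : x ≤ 1 / 100 := three_sub_two_mul_sqrt_two_pow_le hn
  have hx₁ : x ≠ 1 := by linarith
  have hn₀ : (n : ℝ) ≠ 0 := by positivity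
  rw [sqrt_two_mul_one_add_div_one_sub, four_sub_sqrt_two_sub_mul_div hx₁,
    two_sub_sqrt_two_sub_mul_div hx₁, four_mul_sqrt_two_sub_one_sub_mul_div hx₁,
    seven_mul_one_add_div, sub_div, div_self hn₀, ← one_div_mul_one_div]
  obtain ⟨hR₀, hR₁⟩ := one_add_div_sqrt_two_mul_one_sub_mem_Icc hx₀ hx
  have ht₀ : 0 ≤ 1 / (n : ℝ) := by positivity
  have ht : 1 / (n : ℝ) ≤ 1 / 3 := one_div_le_one_div_of_le (by norm_num) (by exact_mod_cast hn)
  refine ⟨?_, ?_, ?_, ?_, ?_, ?_⟩ <;> linarith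
end

section
/- Let α = 3 - 2√2 and for 1 ≤ i ≤ n define r(i) = (1 + α^n - α^{n-i+1} - α^{i-1})/(2√2(1-α^n)) + (n-i+1)(i-1)/n. Then lim_{n→∞} r(⌊(n+2)/2⌋)/n = 1/4. -/
open Filter Real Topology

theorem stmt_18 (α : ℝ) (hα : α = 3 - 2 * Real.sqrt 2)
    (r : ℕ → ℕ → ℝ)
    (hr : ∀ n i, 1 ≤ i → i ≤ n → r n i =
      (1 + α ^ n - α ^ (n - i + 1) - α ^ (i - 1)) / (2 * Real.sqrt 2 * (1 - α ^ n)) +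
      ((n : ℝ) - i + 1) * ((i : ℝ) - 1) / n) :
    Filter.Tendsto (fun n : ℕ => r n ((n + 2) / 2) / n) Filter.atTop
      (nhds (1 / 4)) := by
  have hs2 : Real.sqrt 2 ^ 2 = 2 := Real.sq_sqrt (by norm_num)
  have hs1 : 1 < Real.sqrt 2 := by
    nlinarith [Real.sqrt_nonneg 2]
  have hs15 : Real.sqrt 2 < 3/2 := by nlinarith [Real.sqrt_nonneg 2]
  have hα0 : 0 < α := by rw [hα]; nlinarith
  have hα1 : α < 1 := by rw [hα]; nlinarith
  -- k/n → 1/2 where k = n/2 (nat division)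
  have hk : Filter.Tendsto (fun n : ℕ => ((n / 2 : ℕ) : ℝ) / n) Filter.atTop (nhds (1/2)) := by
    have hlo : Filter.Tendsto (fun n : ℕ => 1/2 - 1/(2*(n:ℝ))) Filter.atTop (nhds (1/2)) := by
      have h0 : Filter.Tendsto (fun n : ℕ => 1/(2*(n:ℝ))) Filter.atTop (nhds 0) := by
        have := tendsto_one_div_atTop_nhds_zero_nat.const_mul (1/2 : ℝ)
        simpa [one_div, mul_inv, mul_comm] using this
      simpa using tendsto_const_nhds.sub h0
    refine tendsto_of_tendsto_of_tendsto_of_le_of_le' hlo tendsto_const_nhds ?_ ?_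
    · filter_upwards [eventually_ge_atTop 1] with n hn
      have hn0 : (0:ℝ) < n := by exact_mod_cast hn
      have h1 : ((n:ℝ) - 1) / 2 ≤ ((n / 2 : ℕ) : ℝ) := by
        have h2 : n ≤ n / 2 * 2 + 1 := by omega
        have h3 : (n:ℝ) ≤ ((n / 2 : ℕ) : ℝ) * 2 + 1 := by exact_mod_cast h2
        linarith
      rw [le_div_iff₀ hn0]
      have heq : (1/2 - 1/(2*(n:ℝ))) * n = ((n:ℝ) - 1) / 2 := by field_simp
      rw [heq]; exact h1
    · filter_upwards [eventually_ge_atTop 1] with n hn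
      have hn0 : (0:ℝ) < n := by exact_mod_cast hn
      have h1 : ((n / 2 : ℕ) : ℝ) ≤ (n:ℝ)/2 := by
        have := Nat.div_mul_le_self n 2
        have h2 : ((n / 2 : ℕ) : ℝ) * 2 ≤ (n:ℝ) := by exact_mod_cast this
        linarith
      rw [div_le_iff₀ hn0]
      have heq : (1:ℝ)/2 * n = (n:ℝ)/2 := by ring
      rw [heq]; exact h1
  -- second part tends to 1/4
  have hG : Filter.Tendsto (fun n : ℕ =>
      (1 - ((n / 2 : ℕ) : ℝ) / n) * (((n / 2 : ℕ) : ℝ) / n)) Filter.atTop (nhds (1/4)) := by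
    have h := ((tendsto_const_nhds : Filter.Tendsto (fun _ : ℕ => (1:ℝ))
        Filter.atTop (nhds 1)).sub hk).mul hk
    have heq : ((1:ℝ) - 1/2) * (1/2) = 1/4 := by norm_num
    rw [heq] at h
    exact h
  -- first part tends to 0
  have hden0 : (0:ℝ) < 2 * Real.sqrt 2 * (1 - α) := by nlinarith
  set C : ℝ := 2 / (2 * Real.sqrt 2 * (1 - α)) with hC
  have hF : Filter.Tendsto (fun n : ℕ =>
      (1 + α ^ n - α ^ (n - (n+2)/2 + 1) - α ^ ((n+2)/2 - 1)) /
        (2 * Real.sqrt 2 * (1 - α ^ n)) / n) Filter.atTop (nhds 0) := by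
    refine squeeze_zero_norm' ?_ (tendsto_const_div_atTop_nhds_zero_nat C)
    · filter_upwards [eventually_ge_atTop 1] with n hn
      have hn0 : (0:ℝ) < n := by exact_mod_cast hn
      have hαn : α ^ n ≤ α := by
        calc α ^ n ≤ α ^ 1 := pow_le_pow_of_le_one hα0.le hα1.le hn
          _ = α := pow_one α
      have hden : (0:ℝ) < 2 * Real.sqrt 2 * (1 - α ^ n) := by nlinarith
      have hnum : |1 + α ^ n - α ^ (n - (n+2)/2 + 1) - α ^ ((n+2)/2 - 1)| ≤ 2 := by
        have h1 : α ^ n ≤ 1 := pow_le_one₀ hα0.le hα1.le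
        have h2 : α ^ (n - (n+2)/2 + 1) ≤ 1 := pow_le_one₀ hα0.le hα1.le
        have h3 : α ^ ((n+2)/2 - 1) ≤ 1 := pow_le_one₀ hα0.le hα1.le
        have p1 : 0 ≤ α ^ n := pow_nonneg hα0.le n
        have p2 : 0 ≤ α ^ (n - (n+2)/2 + 1) := pow_nonneg hα0.le _
        have p3 : 0 ≤ α ^ ((n+2)/2 - 1) := pow_nonneg hα0.le _
        rw [abs_le]; constructor <;> nlinarith
      have habs : |2 * Real.sqrt 2 * (1 - α ^ n) * (n:ℝ)| =
          2 * Real.sqrt 2 * (1 - α ^ n) * n := abs_of_pos (mul_pos hden hn0)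
      rw [div_div, Real.norm_eq_abs, abs_div, habs]
      calc |1 + α ^ n - α ^ (n - (n+2)/2 + 1) - α ^ ((n+2)/2 - 1)| /
            (2 * Real.sqrt 2 * (1 - α ^ n) * n)
          ≤ 2 / (2 * Real.sqrt 2 * (1 - α) * n) := by
            apply div_le_div₀ (by norm_num) hnum (by positivity)
            nlinarith [mul_nonneg (mul_nonneg (by positivity : (0:ℝ) ≤ 2 * Real.sqrt 2)
              (sub_nonneg.2 hαn)) hn0.le]
        _ = C / n := by rw [hC]; field_simp
  have key : Filter.Tendsto (fun n : ℕ =>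
      (1 + α ^ n - α ^ (n - (n+2)/2 + 1) - α ^ ((n+2)/2 - 1)) /
        (2 * Real.sqrt 2 * (1 - α ^ n)) / n +
      (1 - ((n / 2 : ℕ) : ℝ) / n) * (((n / 2 : ℕ) : ℝ) / n)) Filter.atTop (nhds (1/4)) := by
    simpa using hF.add hG
  refine key.congr' ?_
  filter_upwards [eventually_ge_atTop 1] with n hn
  have hn0 : (0:ℝ) < n := by exact_mod_cast hn
  have hi1 : 1 ≤ (n+2)/2 := by omega
  have hi2 : (n+2)/2 ≤ n := by omega
  rw [hr n _ hi1 hi2]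
  have hiv : (n+2)/2 = n/2 + 1 := by omega
  have hcast : (((n+2)/2 : ℕ) : ℝ) = ((n/2 : ℕ) : ℝ) + 1 := by
    rw [hiv]; push_cast; ring
  have hnk : ((n - n/2 : ℕ) : ℝ) = (n:ℝ) - ((n/2 : ℕ) : ℝ) := by
    have : n/2 ≤ n := Nat.div_le_self n 2
    push_cast [this]; ring
  rw [add_div, hcast]
  congr 1
  have : ((n:ℝ) - (((n/2 : ℕ) : ℝ) + 1) + 1) = (n:ℝ) - ((n/2 : ℕ) : ℝ) := by ring
  rw [this]
  field_simp
  ring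
end
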